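/- (Efficient decoder, in-span error bound.) Assume the lower RIP bound (1−δ)‖x‖₂² ≤ (1/m)‖M P^{−1/2} x‖₂² for all x ∈ span(U_k), and ‖M P^{−1/2}‖₂ ≤ M_max. Let g: ℝ → ℝ be nonnegative and nondecreasing on [0,∞) with g(λ_{k+1}) > 0, and let γ > 0. For every x ∈ span(U_k) and w ∈ ℝ^m, let x* be a minimizer over z ∈ ℝ^n of ‖P_Ω^{−1/2}(M z − y)‖₂² + γ zᵀ g(L) z with y = M x + w, and set α* := U_k U_kᵀ x*. Then ‖α* − x‖₂ ≤ (1/√(m(1−δ)))·[(2 + M_max/√(γ g(λ_{k+1})))‖P_Ω^{−1/2} w‖₂ + (M_max √(g(λ_k)/g(λ_{k+1})) + √(γ g(λ_k)))‖x‖₂]. -/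

import Mathlib

open Matrix

/-- Euclidean norm of a finite real vector. -/
noncomputable def norm2 {d : ℕ} (x : Fin d → ℝ) : ℝ := Real.sqrt (∑ j, x j ^ 2)

/-- The sampling matrix `M ∈ ℝ^{m×n}` associated to fixed indices `ω`. -/
def sampMat {n m : ℕ} (ω : Fin m → Fin n) : Matrix (Fin m) (Fin n) ℝ :=
  Matrix.of fun i j => if j = ω i then 1 else 0

/-- `P^{-1/2}` for `P = diag(p)`. -/
noncomputable def pInvSqrt {n : ℕ} (p : Fin n → ℝ) : Matrix (Fin n) (Fin n) ℝ :=
  Matrix.diagonal fun i => (Real.sqrt (p i))⁻¹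

/-- `P_Ω^{-1/2}`, the diagonal matrix with entries `(p ω_i)^{-1/2}`. -/
noncomputable def pOmInvSqrt {n m : ℕ} (p : Fin n → ℝ) (ω : Fin m → Fin n) :
    Matrix (Fin m) (Fin m) ℝ :=
  Matrix.diagonal fun i => (Real.sqrt (p (ω i)))⁻¹

/-- The matrix of the first `k` columns of `U`. -/
def firstCols {n k : ℕ} (hkn : k ≤ n) (U : Matrix (Fin n) (Fin n) ℝ) :
    Matrix (Fin n) (Fin k) ℝ :=
  Matrix.of fun i j => U i (Fin.castLE hkn j)

/-- `g(L) = U diag(g(λ_1),…,g(λ_n)) Uᵀ` for `L = U diag(λ) Uᵀ`. -/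
noncomputable def matFun {n : ℕ} (U : Matrix (Fin n) (Fin n) ℝ) (lam : Fin n → ℝ)
    (g : ℝ → ℝ) : Matrix (Fin n) (Fin n) ℝ :=
  U * Matrix.diagonal (fun i => g (lam i)) * U.transpose

/-!
Let `β = x* - α*` be the part of `x*` orthogonal to `span(U_k)`. Since `g(L)` weighs
`span(U_k)` by at most `g(λ_k)` and its complement by at least `g(λ_{k+1})`, comparing the
objective at the minimiser `x*` with its value at the truth `z = x` bounds both the residual
`‖P_Ω^{-1/2}(M x* - y)‖` and `√(γ g(λ_{k+1})) ‖β‖` by `‖P_Ω^{-1/2} w‖ + √(γ g(λ_k)) ‖x‖`.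
As `P_Ω^{-1/2} M = M P^{-1/2}`, the vector `M P^{-1/2} (α* - x)` is that residual minus
`M P^{-1/2} β` plus `P_Ω^{-1/2} w`; the lower RIP bound on `span(U_k)` turns the resulting
bound on its norm into the bound on `‖α* - x‖`.
-/

lemma norm2_eq_norm {d : ℕ} (x : Fin d → ℝ) :
    norm2 x = ‖(WithLp.toLp 2 x : EuclideanSpace ℝ (Fin d))‖ := by
  simp [norm2, EuclideanSpace.norm_eq]

lemma norm2_nonneg {d : ℕ} (x : Fin d → ℝ) : 0 ≤ norm2 x := Real.sqrt_nonneg _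

lemma norm2_sq {d : ℕ} (x : Fin d → ℝ) : norm2 x ^ 2 = ∑ j, x j ^ 2 :=
  Real.sq_sqrt (by positivity)

lemma norm2_neg {d : ℕ} (x : Fin d → ℝ) : norm2 (-x) = norm2 x := by
  simp [norm2]

lemma nonneg_of_norm2_mulVec_le {m n : ℕ} {A : Matrix (Fin m) (Fin n) ℝ} {C : ℝ} (i : Fin n)
    (hA : ∀ x, norm2 (A *ᵥ x) ≤ C * norm2 x) : 0 ≤ C := by
  simpa [norm2_eq_norm] using (norm2_nonneg _).trans (hA (Pi.single i 1))

lemma norm2_transpose_mulVec {n : ℕ} {U : Matrix (Fin n) (Fin n) ℝ} (hU : Uᵀ * U = 1)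
    (z : Fin n → ℝ) : norm2 (Uᵀ *ᵥ z) = norm2 z := by
  have h : Uᵀ *ᵥ z ⬝ᵥ Uᵀ *ᵥ z = z ⬝ᵥ z := by
    rw [dotProduct_mulVec, vecMul_transpose, mulVec_mulVec, mul_eq_one_comm.mp hU, one_mulVec]
  simpa [norm2, dotProduct, sq] using congrArg Real.sqrt h

lemma norm2_sub_add_le {d : ℕ} (x y z : Fin d → ℝ) :
    norm2 (x - y + z) ≤ norm2 x + norm2 y + norm2 z := by
  simp only [norm2_eq_norm, WithLp.toLp_add, WithLp.toLp_sub]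
  exact (norm_add_le _ _).trans (add_le_add_left (norm_sub_le _ _) _)

lemma norm2_mulVec_sub_le {m n : ℕ} {A : Matrix (Fin m) (Fin n) ℝ} {C : ℝ}
    (hA : ∀ x, norm2 (A *ᵥ x) ≤ C * norm2 x) (a z x : Fin n → ℝ) (v : Fin m → ℝ) :
    norm2 (A *ᵥ (a - x)) ≤ norm2 (A *ᵥ (z - x) - v) + C * norm2 (z - a) + norm2 v := by
  have h : A *ᵥ (a - x) = (A *ᵥ (z - x) - v) - A *ᵥ (z - a) + v := by
    simp only [mulVec_sub]; abel
  rw [h]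
  exact (norm2_sub_add_le _ _ _).trans (by gcongr; exact hA _)

lemma pOmInvSqrt_mul_sampMat {n m : ℕ} (p : Fin n → ℝ) (ω : Fin m → Fin n) :
    pOmInvSqrt p ω * sampMat ω = sampMat ω * pInvSqrt p := by
  ext i j
  by_cases h : j = ω i <;> simp [pOmInvSqrt, pInvSqrt, sampMat, h]

lemma pOmInvSqrt_mulVec_residual {n m : ℕ} (p : Fin n → ℝ) (ω : Fin m → Fin n)
    (z x : Fin n → ℝ) (w : Fin m → ℝ) :
    pOmInvSqrt p ω *ᵥ (sampMat ω *ᵥ z - (sampMat ω *ᵥ x + w))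
      = (sampMat ω * pInvSqrt p) *ᵥ (z - x) - pOmInvSqrt p ω *ᵥ w := by
  rw [sub_add_eq_sub_sub, ← mulVec_sub, mulVec_sub, mulVec_mulVec, pOmInvSqrt_mul_sampMat]

lemma sq_add_sq_le_of_objective_le {r W X Qs Qx γ a b B : ℝ} (hγ : 0 ≤ γ) (ha : 0 ≤ a)
    (hb : 0 ≤ b) (hW : 0 ≤ W) (hX : 0 ≤ X) (hobj : r ^ 2 + γ * Qs ≤ W ^ 2 + γ * Qx)
    (hQx : Qx ≤ a * X ^ 2) (hQs : b * B ^ 2 ≤ Qs) :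
    r ^ 2 + (√(γ * b) * B) ^ 2 ≤ (W + √(γ * a) * X) ^ 2 := by
  rw [mul_pow, Real.sq_sqrt (mul_nonneg hγ hb), add_sq, mul_pow, Real.sq_sqrt (mul_nonneg hγ ha)]
  have := mul_nonneg hW (mul_nonneg (Real.sqrt_nonneg (γ * a)) hX)
  nlinarith [mul_le_mul_of_nonneg_left hQx hγ, mul_le_mul_of_nonneg_left hQs hγ]

lemma le_of_sq_add_sq_le_sq {a b S : ℝ} (ha : 0 ≤ a) (hS : 0 ≤ S)
    (h : a ^ 2 + b ^ 2 ≤ S ^ 2) : a ≤ S :=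
  (pow_le_pow_iff_left₀ ha hS two_ne_zero).mp (by nlinarith [sq_nonneg b])

/-- For `a = 0` the hypothesis forces `T = 0`, matching the junk value `1 / √0 = 0`. -/
lemma le_one_div_sqrt_mul_mul {a c T R : ℝ} (ha : 0 ≤ a) (hc : 0 < c) (hT : 0 ≤ T)
    (hR : 0 ≤ R) (h : c * T ^ 2 ≤ 1 / a * R ^ 2) : T ≤ 1 / √(a * c) * R := by
  rcases ha.eq_or_lt with rfl | ha
  · have hT2 : T ^ 2 ≤ 0 := nonpos_of_mul_nonpos_right (by simpa using h) hc
    simp [pow_eq_zero_iff two_ne_zero |>.mp (le_antisymm hT2 (sq_nonneg T))]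
  · rw [one_div, inv_mul_eq_div, le_div_iff₀ (by positivity)]
    refine (pow_le_pow_iff_left₀ (by positivity) hR two_ne_zero).mp ?_
    rw [mul_pow, Real.sq_sqrt (by positivity)]
    rw [one_div, inv_mul_eq_div, le_div_iff₀ ha] at h
    linarith

lemma sum_mul_sq_le_of_eq_zero {n k : ℕ} {d c : Fin n → ℝ} (hd : Monotone d) {ik : Fin n}
    (hik : (ik : ℕ) = k - 1) (hc : ∀ i : Fin n, k ≤ i → c i = 0) :
    ∑ i, d i * c i ^ 2 ≤ d ik * ∑ i, c i ^ 2 := by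
  rw [Finset.mul_sum]
  refine Finset.sum_le_sum fun i _ => ?_
  by_cases h : (i : ℕ) < k
  · exact mul_le_mul_of_nonneg_right (hd (Fin.le_def.mpr (by omega))) (sq_nonneg _)
  · simp [hc i (not_lt.mp h)]

lemma mul_sum_sq_le_sum_mul_sq {n k : ℕ} {d : Fin n → ℝ} (hd : Monotone d)
    (hd0 : ∀ i, 0 ≤ d i) {ik1 : Fin n} (hik1 : (ik1 : ℕ) = k) (c : Fin n → ℝ) :
    d ik1 * ∑ i : Fin n, (if (i : ℕ) < k then 0 else c i) ^ 2 ≤ ∑ i, d i * c i ^ 2 := by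
  rw [Finset.mul_sum]
  refine Finset.sum_le_sum fun i _ => ?_
  split_ifs with h
  · simpa using mul_nonneg (hd0 i) (sq_nonneg (c i))
  · exact mul_le_mul_of_nonneg_right (hd (Fin.le_def.mpr (by omega))) (sq_nonneg _)

section Spectral

variable {n k : ℕ} {U : Matrix (Fin n) (Fin n) ℝ}

lemma transpose_mul_firstCols (hU : Uᵀ * U = 1) (hkn : k ≤ n) :
    Uᵀ * firstCols hkn U = (1 : Matrix (Fin n) (Fin n) ℝ).submatrix id (Fin.castLE hkn) := by
  rw [← hU]; rfl

lemma firstCols_transpose_mul_firstCols (hU : Uᵀ * U = 1) (hkn : k ≤ n) :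
    (firstCols hkn U)ᵀ * firstCols hkn U = 1 := by
  rw [← submatrix_one_embedding (Fin.castLEEmb hkn), ← hU]; rfl

lemma one_submatrix_castLE_mulVec_apply {R : Type*} [Semiring R] (hkn : k ≤ n) (v : Fin k → R)
    (i : Fin n) :
    ((1 : Matrix (Fin n) (Fin n) R).submatrix id (Fin.castLE hkn) *ᵥ v) i
      = if h : (i : ℕ) < k then v ⟨i, h⟩ else 0 := by
  rw [mulVec, dotProduct]
  split_ifs with h
  · rw [Fintype.sum_eq_single ⟨i, h⟩]
    · simp [one_apply]
    · intro j hj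
      simp only [submatrix_apply, id, one_apply, Fin.ext_iff, Fin.val_castLE, ite_mul, one_mul,
        zero_mul]
      exact if_neg fun hij => hj (Fin.ext hij.symm)
  · refine Finset.sum_eq_zero fun j _ => ?_
    simp only [submatrix_apply, id, one_apply, Fin.ext_iff, Fin.val_castLE, ite_mul, one_mul,
      zero_mul]
    exact if_neg fun hij : (i : ℕ) = j => h (hij ▸ j.isLt)

lemma transpose_mulVec_firstCols_mul_transpose_mulVec (hU : Uᵀ * U = 1) (hkn : k ≤ n)
    (z : Fin n → ℝ) (i : Fin n) :
    (Uᵀ *ᵥ ((firstCols hkn U * (firstCols hkn U)ᵀ) *ᵥ z)) i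
      = if (i : ℕ) < k then (Uᵀ *ᵥ z) i else 0 := by
  rw [← mulVec_mulVec, mulVec_mulVec, transpose_mul_firstCols hU,
    one_submatrix_castLE_mulVec_apply]
  split_ifs with h
  · simp [mulVec, dotProduct, firstCols, Fin.castLE]
  · rfl

lemma firstCols_mul_transpose_mulVec_firstCols_mulVec (hU : Uᵀ * U = 1) (hkn : k ≤ n)
    (α : Fin k → ℝ) :
    (firstCols hkn U * (firstCols hkn U)ᵀ) *ᵥ (firstCols hkn U *ᵥ α)
      = firstCols hkn U *ᵥ α := by
  rw [mulVec_mulVec, Matrix.mul_assoc, firstCols_transpose_mul_firstCols hU, Matrix.mul_one]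

lemma dotProduct_matFun_mulVec (lam : Fin n → ℝ) (g : ℝ → ℝ) (z : Fin n → ℝ) :
    z ⬝ᵥ matFun U lam g *ᵥ z = ∑ i, g (lam i) * (Uᵀ *ᵥ z) i ^ 2 := by
  rw [matFun, ← mulVec_mulVec, ← mulVec_mulVec, dotProduct_mulVec, ← mulVec_transpose,
    dotProduct]
  simp only [mulVec_diagonal, sq]
  exact Finset.sum_congr rfl fun i _ => by ring

lemma dotProduct_matFun_mulVec_le {lam : Fin n → ℝ} {g : ℝ → ℝ} (hU : Uᵀ * U = 1)
    (hkn : k ≤ n) (hd : Monotone fun i => g (lam i)) {ik : Fin n} (hik : (ik : ℕ) = k - 1)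
    {x : Fin n → ℝ} (hx : (firstCols hkn U * (firstCols hkn U)ᵀ) *ᵥ x = x) :
    x ⬝ᵥ matFun U lam g *ᵥ x ≤ g (lam ik) * norm2 x ^ 2 := by
  have hc (i : Fin n) (hi : k ≤ i) : (Uᵀ *ᵥ x) i = 0 := by
    rw [← hx, transpose_mulVec_firstCols_mul_transpose_mulVec hU hkn, if_neg (by omega)]
  rw [dotProduct_matFun_mulVec, ← norm2_transpose_mulVec hU, norm2_sq]
  exact sum_mul_sq_le_of_eq_zero hd hik hc

lemma mul_norm2_sub_sq_le_dotProduct_matFun_mulVec {lam : Fin n → ℝ} {g : ℝ → ℝ}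
    (hU : Uᵀ * U = 1) (hkn : k ≤ n) (hd : Monotone fun i => g (lam i))
    (hd0 : ∀ i, 0 ≤ g (lam i)) {ik1 : Fin n} (hik1 : (ik1 : ℕ) = k) (z : Fin n → ℝ) :
    g (lam ik1) * norm2 (z - (firstCols hkn U * (firstCols hkn U)ᵀ) *ᵥ z) ^ 2
      ≤ z ⬝ᵥ matFun U lam g *ᵥ z := by
  have hc : Uᵀ *ᵥ (z - (firstCols hkn U * (firstCols hkn U)ᵀ) *ᵥ z)
      = fun i : Fin n => if (i : ℕ) < k then 0 else (Uᵀ *ᵥ z) i := by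
    ext i
    rw [mulVec_sub, Pi.sub_apply, transpose_mulVec_firstCols_mul_transpose_mulVec hU hkn]
    split_ifs <;> ring
  rw [dotProduct_matFun_mulVec, ← norm2_transpose_mulVec hU, norm2_sq, hc]
  exact mul_sum_sq_le_sum_mul_sq hd hd0 hik1 _

end Spectral

theorem efficient_decoder_alpha_bound_general (n k m : ℕ) (hkn : k < n)
    (U : Matrix (Fin n) (Fin n) ℝ) (hU : U.transpose * U = 1)
    (lam : Fin n → ℝ) (hmono : Monotone lam) (hnonneg : ∀ i, 0 ≤ lam i)
    (ik ik1 : Fin n) (hik : (ik : ℕ) = k - 1) (hik1 : (ik1 : ℕ) = k)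
    (p : Fin n → ℝ)
    (ω : Fin m → Fin n) (δ : ℝ) (hδ1 : δ < 1)
    (hRIP : ∀ x : Fin n → ℝ,
      (∃ α : Fin k → ℝ, x = (firstCols hkn.le U).mulVec α) →
      (1 - δ) * norm2 x ^ 2 ≤ (1 / m) * norm2 ((sampMat ω * pInvSqrt p).mulVec x) ^ 2)
    (Mmax : ℝ)
    (hMmax : ∀ x : Fin n → ℝ, norm2 ((sampMat ω * pInvSqrt p).mulVec x) ≤ Mmax * norm2 x)
    (g : ℝ → ℝ) (hgnn : ∀ t, 0 ≤ t → 0 ≤ g t)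
    (hgmono : ∀ s t, 0 ≤ s → s ≤ t → g s ≤ g t)
    (hgk1 : 0 < g (lam ik1))
    (γ : ℝ) (hγ : 0 < γ)
    (x : Fin n → ℝ) (hx : ∃ α : Fin k → ℝ, x = (firstCols hkn.le U).mulVec α)
    (w : Fin m → ℝ)
    (xstar : Fin n → ℝ)
    (hmin : ∀ z : Fin n → ℝ,
      norm2 ((pOmInvSqrt p ω).mulVec
            ((sampMat ω).mulVec xstar - ((sampMat ω).mulVec x + w))) ^ 2
          + γ * (xstar ⬝ᵥ (matFun U lam g).mulVec xstar)
        ≤ norm2 ((pOmInvSqrt p ω).mulVec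
            ((sampMat ω).mulVec z - ((sampMat ω).mulVec x + w))) ^ 2
          + γ * (z ⬝ᵥ (matFun U lam g).mulVec z)) :
    norm2 ((firstCols hkn.le U * (firstCols hkn.le U).transpose).mulVec xstar - x)
      ≤ (1 / Real.sqrt (m * (1 - δ))) *
        ((2 + Mmax / Real.sqrt (γ * g (lam ik1))) * norm2 ((pOmInvSqrt p ω).mulVec w)
          + (Mmax * Real.sqrt (g (lam ik) / g (lam ik1)) + Real.sqrt (γ * g (lam ik)))
            * norm2 x) := by
  obtain ⟨α, hxα⟩ := hx
  set V := firstCols hkn.le U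
  set A := sampMat ω * pInvSqrt p
  set w' := pOmInvSqrt p ω *ᵥ w
  set β := xstar - (V * Vᵀ) *ᵥ xstar
  set G := √(γ * g (lam ik1))
  set S := norm2 w' + √(γ * g (lam ik)) * norm2 x
  have hd : Monotone fun i => g (lam i) := fun i j hij => hgmono _ _ (hnonneg i) (hmono hij)
  have hd0 (i : Fin n) : 0 ≤ g (lam i) := hgnn _ (hnonneg i)
  have hG : 0 < G := Real.sqrt_pos.mpr (mul_pos hγ hgk1)
  have hS : 0 ≤ S :=
    add_nonneg (norm2_nonneg _) (mul_nonneg (Real.sqrt_nonneg _) (norm2_nonneg _))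
  have hobj : norm2 (A *ᵥ (xstar - x) - w') ^ 2 + (G * norm2 β) ^ 2 ≤ S ^ 2 :=
    sq_add_sq_le_of_objective_le hγ.le (hd0 ik) (hd0 ik1) (norm2_nonneg _) (norm2_nonneg _)
      (by simpa only [pOmInvSqrt_mulVec_residual, sub_self, mulVec_zero, zero_sub, norm2_neg]
        using hmin x)
      (dotProduct_matFun_mulVec_le hU hkn.le hd hik
        (hxα ▸ firstCols_mul_transpose_mulVec_firstCols_mulVec hU hkn.le α))
      (mul_norm2_sub_sq_le_dotProduct_matFun_mulVec hU hkn.le hd hd0 hik1 xstar)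
  have hr : norm2 (A *ᵥ (xstar - x) - w') ≤ S := le_of_sq_add_sq_le_sq (norm2_nonneg _) hS hobj
  have hβ : norm2 β ≤ S / G := by
    rw [le_div_iff₀ hG, mul_comm]
    exact le_of_sq_add_sq_le_sq (mul_nonneg hG.le (norm2_nonneg _)) hS
      ((add_comm _ _).trans_le hobj)
  have hAerr : norm2 (A *ᵥ ((V * Vᵀ) *ᵥ xstar - x)) ≤ S + Mmax * (S / G) + norm2 w' := by
    have hM0 : 0 ≤ Mmax := nonneg_of_norm2_mulVec_le ⟨0, by omega⟩ hMmax
    exact (norm2_mulVec_sub_le hMmax _ xstar x w').trans (by gcongr)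
  have hratio : √(g (lam ik) / g (lam ik1)) = √(γ * g (lam ik)) / G := by
    rw [← Real.sqrt_div' _ (mul_pos hγ hgk1).le, mul_div_mul_left _ _ hγ.ne']
  calc _ ≤ 1 / √(m * (1 - δ)) * norm2 (A *ᵥ ((V * Vᵀ) *ᵥ xstar - x)) :=
        le_one_div_sqrt_mul_mul m.cast_nonneg (by linarith) (norm2_nonneg _) (norm2_nonneg _)
          (hRIP _ ⟨Vᵀ *ᵥ xstar - α, by rw [mulVec_sub, mulVec_mulVec, hxα]⟩)
    _ ≤ _ := by
        gcongr
        refine hAerr.trans_eq ?_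
        rw [hratio]
        field_simp
        ring

/-- Efficient decoder, error bound on the in-span component `α* = U_k U_kᵀ x*`. -/
theorem efficient_decoder_alpha_bound (n k m : ℕ) (hk : 0 < k) (hkn : k < n) (hm : 0 < m)
    (U : Matrix (Fin n) (Fin n) ℝ) (hU : U.transpose * U = 1)
    (lam : Fin n → ℝ) (hmono : Monotone lam) (hnonneg : ∀ i, 0 ≤ lam i)
    (ik ik1 : Fin n) (hik : (ik : ℕ) = k - 1) (hik1 : (ik1 : ℕ) = k)
    (p : Fin n → ℝ) (hp : ∀ i, 0 < p i) (hpsum : ∑ i, p i = 1)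
    (ω : Fin m → Fin n) (δ : ℝ) (hδ0 : 0 < δ) (hδ1 : δ < 1)
    (hRIP : ∀ x : Fin n → ℝ,
      (∃ α : Fin k → ℝ, x = (firstCols hkn.le U).mulVec α) →
      (1 - δ) * norm2 x ^ 2 ≤ (1 / m) * norm2 ((sampMat ω * pInvSqrt p).mulVec x) ^ 2)
    (Mmax : ℝ)
    (hMmax : ∀ x : Fin n → ℝ, norm2 ((sampMat ω * pInvSqrt p).mulVec x) ≤ Mmax * norm2 x)
    (g : ℝ → ℝ) (hgnn : ∀ t, 0 ≤ t → 0 ≤ g t)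
    (hgmono : ∀ s t, 0 ≤ s → s ≤ t → g s ≤ g t)
    (hgk1 : 0 < g (lam ik1))
    (γ : ℝ) (hγ : 0 < γ)
    (x : Fin n → ℝ) (hx : ∃ α : Fin k → ℝ, x = (firstCols hkn.le U).mulVec α)
    (w : Fin m → ℝ)
    (xstar : Fin n → ℝ)
    (hmin : ∀ z : Fin n → ℝ,
      norm2 ((pOmInvSqrt p ω).mulVec
            ((sampMat ω).mulVec xstar - ((sampMat ω).mulVec x + w))) ^ 2
          + γ * (xstar ⬝ᵥ (matFun U lam g).mulVec xstar)
        ≤ norm2 ((pOmInvSqrt p ω).mulVec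
            ((sampMat ω).mulVec z - ((sampMat ω).mulVec x + w))) ^ 2
          + γ * (z ⬝ᵥ (matFun U lam g).mulVec z)) :
    norm2 ((firstCols hkn.le U * (firstCols hkn.le U).transpose).mulVec xstar - x)
      ≤ (1 / Real.sqrt (m * (1 - δ))) *
        ((2 + Mmax / Real.sqrt (γ * g (lam ik1))) * norm2 ((pOmInvSqrt p ω).mulVec w)
          + (Mmax * Real.sqrt (g (lam ik) / g (lam ik1)) + Real.sqrt (γ * g (lam ik)))
            * norm2 x) :=
  efficient_decoder_alpha_bound_general n k m hkn U hU lam hmono hnonneg ik ik1 hik hik1 p ω δ hδ1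
    hRIP Mmax hMmax g hgnn hgmono hgk1 γ hγ x hx w xstar hmin
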